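/- The function (t,x) ↦ ½·Y(t − |x|) on ℝ², where Y is the Heaviside function, is a fundamental solution of the wave operator ∂_t² − ∂_x², i.e. (∂_t² − ∂_x²)(½ Y(t − |x|)) = δ_{(0,0)} in the sense of distributions. -/

import Mathlib

open MeasureTheory Set Filter

namespace WaveAux

variable {f : ℝ × ℝ → ℝ}

lemma isom_fix2 (x : ℝ) : Isometry (fun t : ℝ => (t, x)) :=
  Isometry.of_dist_eq fun a b => by
    simp only [Prod.dist_eq, dist_self]
    exact max_eq_left dist_nonneg

lemma isom_diag : Isometry (fun s : ℝ => (s, s)) :=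
  Isometry.of_dist_eq fun a b => by simp [Prod.dist_eq]

lemma isom_antidiag : Isometry (fun s : ℝ => (s, -s)) :=
  Isometry.of_dist_eq fun a b => by simp [Prod.dist_eq, dist_neg_neg]

lemma isom_absline : Isometry (fun x : ℝ => (|x|, x)) :=
  Isometry.of_dist_eq fun a b => by
    simp only [Prod.dist_eq]
    exact max_eq_right (by rw [Real.dist_eq, Real.dist_eq]; exact abs_abs_sub_abs_le_abs_sub _ _)

lemma hcs_line (hs : HasCompactSupport f) {L : ℝ → ℝ × ℝ} (hL : Isometry L) :
    HasCompactSupport (fun s => f (L s)) :=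
  hs.comp_isClosedEmbedding hL.isClosedEmbedding

lemma integrable_line (hf : Continuous f) (hs : HasCompactSupport f) {L : ℝ → ℝ × ℝ}
    (hL : Isometry L) : Integrable (fun s => f (L s)) :=
  (hf.comp hL.continuous).integrable_of_hasCompactSupport (hcs_line hs hL)

lemma hasDerivAt_fix2 (hf : Differentiable ℝ f) (x t : ℝ) :
    HasDerivAt (fun t => f (t, x)) (fderiv ℝ f (t, x) (1, 0)) t :=
  (hf (t, x)).hasFDerivAt.comp_hasDerivAt t ((hasDerivAt_id t).prodMk (hasDerivAt_const t x))

lemma hasDerivAt_fix1 (hf : Differentiable ℝ f) (t x : ℝ) :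
    HasDerivAt (fun x => f (t, x)) (fderiv ℝ f (t, x) (0, 1)) x :=
  (hf (t, x)).hasFDerivAt.comp_hasDerivAt x ((hasDerivAt_const x t).prodMk (hasDerivAt_id x))

lemma hasDerivAt_diag (hf : Differentiable ℝ f) (s : ℝ) :
    HasDerivAt (fun s => f (s, s)) (fderiv ℝ f (s, s) (1, 1)) s := by
  have hL : HasDerivAt (fun s : ℝ => ((s : ℝ), (s : ℝ))) ((1 : ℝ), (1 : ℝ)) s :=
    (hasDerivAt_id s).prodMk (hasDerivAt_id s)
  exact HasFDerivAt.comp_hasDerivAt (f := fun s : ℝ => ((s : ℝ), (s : ℝ))) s (hf (s, s)).hasFDerivAt hL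

lemma hasDerivAt_antidiag (hf : Differentiable ℝ f) (s : ℝ) :
    HasDerivAt (fun s => f (s, -s)) (fderiv ℝ f (s, -s) (1, -1)) s := by
  have hL : HasDerivAt (fun s : ℝ => ((s : ℝ), -(s : ℝ))) ((1 : ℝ), (-1 : ℝ)) s :=
    (hasDerivAt_id s).prodMk (hasDerivAt_id s).neg
  exact HasFDerivAt.comp_hasDerivAt (f := fun s : ℝ => ((s : ℝ), -(s : ℝ))) s (hf (s, -s)).hasFDerivAt hL

lemma contDiff_dapply (hf : ContDiff ℝ (⊤ : ℕ∞) f) (v : ℝ × ℝ) :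
    ContDiff ℝ (⊤ : ℕ∞) (fun q => fderiv ℝ f q v) :=
  (hf.fderiv_right (by simp)).clm_apply contDiff_const

lemma hcs_dapply (hs : HasCompactSupport f) (v : ℝ × ℝ) :
    HasCompactSupport (fun q => fderiv ℝ f q v) :=
  hs.fderiv_apply ℝ v

end WaveAux

open WaveAux

/-- `½·Y(t − |x|)` is a fundamental solution of the wave operator
`∂ₜ² − ∂ₓ²` on `ℝ²`: for every test function `φ`,
`∫_{t ≥ |x|} ½ (∂ₜ²φ − ∂ₓ²φ) = φ(0,0)`. -/
theorem half_heaviside_cone_fundamental_solution_wave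
    (φ : ℝ × ℝ → ℝ) (hφ : ContDiff ℝ (⊤ : ℕ∞) φ) (hsupp : HasCompactSupport φ) :
    ∫ p in {p : ℝ × ℝ | |p.2| ≤ p.1},
        (1 / 2 : ℝ) * (fderiv ℝ (fun q => fderiv ℝ φ q (1, 0)) p (1, 0)
          - fderiv ℝ (fun q => fderiv ℝ φ q (0, 1)) p (0, 1)) = φ (0, 0) := by
  have hd : Differentiable ℝ φ := hφ.differentiable (by simp)
  set Dt : ℝ × ℝ → ℝ := fun q => fderiv ℝ φ q (1, 0) with hDt
  set Dx : ℝ × ℝ → ℝ := fun q => fderiv ℝ φ q (0, 1) with hDx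
  set S : Set (ℝ × ℝ) := {p : ℝ × ℝ | |p.2| ≤ p.1} with hS
  have hDtc : ContDiff ℝ (⊤ : ℕ∞) Dt := contDiff_dapply hφ _
  have hDxc : ContDiff ℝ (⊤ : ℕ∞) Dx := contDiff_dapply hφ _
  have hDtd : Differentiable ℝ Dt := hDtc.differentiable (by simp)
  have hDxd : Differentiable ℝ Dx := hDxc.differentiable (by simp)
  have hDts : HasCompactSupport Dt := hcs_dapply hsupp _
  have hDxs : HasCompactSupport Dx := hcs_dapply hsupp _
  have hDttc : ContDiff ℝ (⊤ : ℕ∞) (fun p => fderiv ℝ Dt p (1, 0)) := contDiff_dapply hDtc _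
  have hDxxc : ContDiff ℝ (⊤ : ℕ∞) (fun p => fderiv ℝ Dx p (0, 1)) := contDiff_dapply hDxc _
  have hDtts : HasCompactSupport (fun p => fderiv ℝ Dt p (1, 0)) := hcs_dapply hDts _
  have hDxxs : HasCompactSupport (fun p => fderiv ℝ Dx p (0, 1)) := hcs_dapply hDxs _
  have hSm : MeasurableSet S :=
    (isClosed_le (continuous_snd.abs) continuous_fst).measurableSet
  have hItt : Integrable (fun p => fderiv ℝ Dt p (1, 0)) :=
    hDttc.continuous.integrable_of_hasCompactSupport hDtts
  have hIxx : Integrable (fun p => fderiv ℝ Dx p (0, 1)) :=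
    hDxxc.continuous.integrable_of_hasCompactSupport hDxxs
  -- Claim 1 : the ∂ₜ² term
  have h1 : (∫ p in S, fderiv ℝ Dt p (1, 0)) = - ∫ x : ℝ, Dt (|x|, x) := by
    rw [← integral_indicator hSm,
      show (volume : Measure (ℝ × ℝ)) = (volume : Measure ℝ).prod volume from rfl,
      integral_prod_symm _ (hItt.indicator hSm)]
    have hinner : ∀ x : ℝ,
        (∫ t : ℝ, S.indicator (fun p => fderiv ℝ Dt p (1, 0)) (t, x)) = - Dt (|x|, x) := by
      intro x
      have heq : (fun t : ℝ => S.indicator (fun p => fderiv ℝ Dt p (1, 0)) (t, x))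
          = (Ici |x|).indicator (fun t => fderiv ℝ Dt (t, x) (1, 0)) := by
        funext t
        simp only [indicator_apply]
        exact if_congr (by simp [hS]) rfl rfl
      rw [heq, integral_indicator measurableSet_Ici, integral_Ici_eq_integral_Ioi]
      have hde : ∀ t : ℝ, fderiv ℝ Dt (t, x) (1, 0) = deriv (fun t => Dt (t, x)) t :=
        fun t => (hasDerivAt_fix2 hDtd x t).deriv.symm
      have hcd : ContDiff ℝ 1 (fun t : ℝ => Dt (t, x)) :=
        (hDtc.comp (contDiff_id.prodMk contDiff_const)).of_le (by simp)
      have hcs : HasCompactSupport (fun t : ℝ => Dt (t, x)) := hcs_line hDts (isom_fix2 x)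
      simp_rw [hde]
      exact HasCompactSupport.integral_Ioi_deriv_eq hcd hcs |x|
    simp_rw [hinner]
    exact integral_neg _
  -- Claim 2 : the ∂ₓ² term
  have h2 : (∫ p in S, fderiv ℝ Dx p (0, 1))
      = ∫ t in Ioi (0:ℝ), (Dx (t, t) - Dx (t, -t)) := by
    rw [← integral_indicator hSm,
      show (volume : Measure (ℝ × ℝ)) = (volume : Measure ℝ).prod volume from rfl,
      integral_prod _ (hIxx.indicator hSm)]
    have hinner : ∀ t : ℝ,
        (∫ x : ℝ, S.indicator (fun p => fderiv ℝ Dx p (0, 1)) (t, x))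
          = ∫ x in Icc (-t) t, fderiv ℝ Dx (t, x) (0, 1) := by
      intro t
      have heq : (fun x : ℝ => S.indicator (fun p => fderiv ℝ Dx p (0, 1)) (t, x))
          = (Icc (-t) t).indicator (fun x => fderiv ℝ Dx (t, x) (0, 1)) := by
        funext x
        simp only [indicator_apply]
        exact if_congr (by simp [hS, abs_le]) rfl rfl
      rw [heq, integral_indicator measurableSet_Icc]
    simp_rw [hinner]
    have hzero : ∀ t : ℝ, t ∉ Ioi (0:ℝ) →
        (∫ x in Icc (-t) t, fderiv ℝ Dx (t, x) (0, 1)) = 0 := by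
      intro t ht
      have ht' : t ≤ 0 := le_of_not_gt (by simpa using ht)
      rcases lt_or_eq_of_le ht' with h | h
      · rw [Icc_eq_empty (by linarith), setIntegral_empty]
      · subst h
        rw [Measure.restrict_eq_zero.mpr (by simp), integral_zero_measure]
    rw [← setIntegral_eq_integral_of_forall_compl_eq_zero hzero]
    refine setIntegral_congr_fun measurableSet_Ioi (fun t ht => ?_)
    have htpos : (0:ℝ) < t := ht
    rw [integral_Icc_eq_integral_Ioc, ← intervalIntegral.integral_of_le (by linarith : -t ≤ t)]
    exact intervalIntegral.integral_eq_sub_of_hasDerivAt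
      (fun x _ => hasDerivAt_fix1 hDxd t x)
      ((hDxxc.continuous.comp (continuous_const.prodMk continuous_id)).intervalIntegrable _ _)
  -- Claim 3 : split the abs-line integral
  have h3 : (∫ x : ℝ, Dt (|x|, x))
      = (∫ s in Ioi (0:ℝ), Dt (s, s)) + ∫ s in Ioi (0:ℝ), Dt (s, -s) := by
    have hint : Integrable (fun x : ℝ => Dt (|x|, x)) :=
      integrable_line hDtc.continuous hDts isom_absline
    rw [← intervalIntegral.integral_Iic_add_Ioi (b := (0:ℝ)) hint.integrableOn hint.integrableOn]
    have hA : (∫ x in Iic (0:ℝ), Dt (|x|, x)) = ∫ s in Ioi (0:ℝ), Dt (s, -s) := by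
      have := integral_comp_neg_Iic (0:ℝ) (fun y => Dt (|(-y)|, -y))
      simp only [neg_neg, neg_zero] at this
      rw [this]
      refine setIntegral_congr_fun measurableSet_Ioi (fun s hs => ?_)
      rw [abs_neg, abs_of_pos hs]
    have hB : (∫ x in Ioi (0:ℝ), Dt (|x|, x)) = ∫ s in Ioi (0:ℝ), Dt (s, s) :=
      setIntegral_congr_fun measurableSet_Ioi (fun s hs => by rw [abs_of_pos hs])
    rw [hA, hB, add_comm]
  -- Claim 4 : diagonal FTC
  have h4 : (∫ s in Ioi (0:ℝ), (Dt (s, s) + Dx (s, s))) = - φ (0, 0) := by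
    have hg : ContDiff ℝ 1 (fun s : ℝ => φ (s, s)) :=
      (hφ.comp (contDiff_id.prodMk contDiff_id)).of_le (by simp)
    have hgs : HasCompactSupport (fun s : ℝ => φ (s, s)) := hcs_line hsupp isom_diag
    have hde : ∀ s : ℝ, Dt (s, s) + Dx (s, s) = deriv (fun s : ℝ => φ (s, s)) s := by
      intro s
      rw [(hasDerivAt_diag hd s).deriv]
      have hv : ((1:ℝ), (1:ℝ)) = ((1:ℝ), (0:ℝ)) + ((0:ℝ), (1:ℝ)) := by simp
      rw [hv, map_add]
    simp_rw [hde]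
    simpa using HasCompactSupport.integral_Ioi_deriv_eq hg hgs 0
  -- Claim 5 : antidiagonal FTC
  have h5 : (∫ s in Ioi (0:ℝ), (Dt (s, -s) - Dx (s, -s))) = - φ (0, 0) := by
    have hg : ContDiff ℝ 1 (fun s : ℝ => φ (s, -s)) :=
      (hφ.comp (contDiff_id.prodMk contDiff_id.neg)).of_le (by simp)
    have hgs : HasCompactSupport (fun s : ℝ => φ (s, -s)) := hcs_line hsupp isom_antidiag
    have hde : ∀ s : ℝ, Dt (s, -s) - Dx (s, -s) = deriv (fun s : ℝ => φ (s, -s)) s := by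
      intro s
      rw [(hasDerivAt_antidiag hd s).deriv]
      have hv : ((1:ℝ), (-1:ℝ)) = ((1:ℝ), (0:ℝ)) - ((0:ℝ), (1:ℝ)) := by simp
      rw [hv, map_sub]
    simp_rw [hde]
    simpa using HasCompactSupport.integral_Ioi_deriv_eq hg hgs 0
  -- splitting sums
  have hadd : (∫ s in Ioi (0:ℝ), (Dt (s, s) + Dx (s, s)))
      = (∫ s in Ioi (0:ℝ), Dt (s, s)) + ∫ s in Ioi (0:ℝ), Dx (s, s) :=
    integral_add (integrable_line hDtc.continuous hDts isom_diag).integrableOn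
      (integrable_line hDxc.continuous hDxs isom_diag).integrableOn
  have hsub : (∫ s in Ioi (0:ℝ), (Dt (s, -s) - Dx (s, -s)))
      = (∫ s in Ioi (0:ℝ), Dt (s, -s)) - ∫ s in Ioi (0:ℝ), Dx (s, -s) :=
    integral_sub (integrable_line hDtc.continuous hDts isom_antidiag).integrableOn
      (integrable_line hDxc.continuous hDxs isom_antidiag).integrableOn
  have hsub2 : (∫ t in Ioi (0:ℝ), (Dx (t, t) - Dx (t, -t)))
      = (∫ s in Ioi (0:ℝ), Dx (s, s)) - ∫ s in Ioi (0:ℝ), Dx (s, -s) :=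
    integral_sub (integrable_line hDxc.continuous hDxs isom_diag).integrableOn
      (integrable_line hDxc.continuous hDxs isom_antidiag).integrableOn
  -- assemble
  rw [integral_const_mul, integral_sub hItt.integrableOn hIxx.integrableOn, h1, h2, h3]
  rw [hadd] at h4
  rw [hsub] at h5
  rw [hsub2]
  linarith [h4, h5]
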